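/- arXiv:2303.08712 — 3 statements merged into one kernel-verified Lean document; each statement's English description precedes it below -/
import Mathlib

section
/- Let m ≥ 2, and let G be a directed graph of order n = 2^m − 1 without isolated vertices that is realizable in (Z_2)^m via a labeling ψ. Then the image of the induced vertex map φ_ψ is exactly (Z_2)^m \ {0}; equivalently, the single element of (Z_2)^m not attained by φ_ψ is the identity element 0. -/
/-!
Every arc `xy` contributes `ψ(xy)` to `φ_ψ(x)` and `-ψ(xy)` to `φ_ψ(y)`, so the values of `φ_ψ`
sum to `0`. For `m ≥ 2` the elements of `(ℤ₂)^m` also sum to `0`. An injective `φ_ψ` on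
`2^m - 1` vertices misses exactly one element of `(ℤ₂)^m`, which is therefore the difference of
these two sums, i.e. `0`.
-/

open Finset

/-- Weak reachability in a digraph: the reflexive-transitive closure of the
symmetrized adjacency relation. The weakly connected component of `x` is
`{y | WReach Adj x y}`. -/
def WReach {V : Type*} (Adj : V → V → Prop) : V → V → Prop :=
  Relation.ReflTransGen (fun a b => Adj a b ∨ Adj b a)

/-- The induced vertex map `φ_ψ` of an arc labeling `ψ`:
`φ_ψ(x) = Σ_{y ∈ N⁺(x)} ψ(x,y) − Σ_{y ∈ N⁻(x)} ψ(y,x)`. -/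
def vertexSum {V Γ : Type*} [Fintype V] [AddCommGroup Γ]
    (Adj : V → V → Prop) [DecidableRel Adj] (ψ : V → V → Γ) (x : V) : Γ :=
  (∑ y ∈ univ.filter (fun y => Adj x y), ψ x y)
    - (∑ y ∈ univ.filter (fun y => Adj y x), ψ y x)

/-- `G` is realizable in `Γ`: there is a `Γ`-irregular arc labeling, i.e. one whose
induced vertex map is injective. -/
def Realizable {V : Type*} [Fintype V] (Adj : V → V → Prop) [DecidableRel Adj]
    (Γ : Type*) [AddCommGroup Γ] : Prop :=
  ∃ ψ : V → V → Γ, Function.Injective (vertexSum Adj ψ)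

theorem sum_vertexSum_eq_zero {V Γ : Type*} [Fintype V] [AddCommGroup Γ]
    (Adj : V → V → Prop) [DecidableRel Adj] (ψ : V → V → Γ) :
    ∑ x, vertexSum Adj ψ x = 0 := by
  simp only [vertexSum, sum_sub_distrib, sum_filter, sub_eq_zero]
  exact sum_comm

/-- Each value of a coordinate is taken `|M|^(|ι| - 1)` times, a positive power of `|M|`, and
`|M| • a = 0` in any finite group. -/
theorem Fintype.sum_univ_pi_eq_zero {ι M : Type*} [Fintype ι] [DecidableEq ι]
    [AddCommGroup M] [Fintype M] (hι : 2 ≤ Fintype.card ι) :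
    ∑ g : ι → M, g = 0 := by
  ext i
  obtain ⟨k, hk⟩ : ∃ k, Fintype.card ι - 1 = k + 1 := ⟨Fintype.card ι - 2, by omega⟩
  have h := Fintype.sum_piFinset_apply (ι := ι) id (univ : Finset M) i
  simp only [id, Fintype.piFinset_univ] at h
  rw [sum_apply, h, card_univ, hk, pow_succ, mul_nsmul, card_nsmul_eq_zero, Pi.zero_apply]

theorem range_eq_setOf_ne_zero_of_sum_eq_zero {α G : Type*} [Fintype α] [AddCommGroup G]
    [Fintype G] [DecidableEq G] {f : α → G} (hf : Function.Injective f)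
    (hcard : Fintype.card α + 1 = Fintype.card G) (hsum_f : ∑ a, f a = 0)
    (hsum_G : ∑ g : G, g = 0) :
    Set.range f = {g | g ≠ 0} := by
  obtain ⟨g₀, hg₀⟩ : ∃ g₀, univ \ univ.image f = {g₀} := by
    rw [← card_eq_one, card_sdiff_of_subset (subset_univ _), card_image_of_injective _ hf,
      card_univ, card_univ]
    omega
  have hg₀_eq : g₀ = 0 :=
    calc g₀ = ∑ g ∈ univ \ univ.image f, g + ∑ g ∈ univ.image f, g := by
          rw [hg₀, sum_singleton, sum_image hf.injOn, hsum_f, add_zero]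
      _ = 0 := by rw [sum_sdiff (subset_univ _), hsum_G]
  ext g
  have hmem : g ∈ univ \ univ.image f ↔ g = g₀ := by rw [hg₀, mem_singleton]
  rw [Set.mem_range, Set.mem_ofPred_eq, ← hg₀_eq, ne_eq, ← hmem]
  simp

theorem stmt_2_general {V : Type*} [Fintype V] (Adj : V → V → Prop) [DecidableRel Adj]
    (m : ℕ) (hm : 2 ≤ m)
    (hn : Fintype.card V = 2 ^ m - 1)
    (ψ : V → V → (Fin m → ZMod 2))
    (hψ : Function.Injective (vertexSum Adj ψ)) :
    Set.range (vertexSum Adj ψ) = {g : Fin m → ZMod 2 | g ≠ 0} := by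
  refine range_eq_setOf_ne_zero_of_sum_eq_zero hψ ?_ (sum_vertexSum_eq_zero Adj ψ)
    (Fintype.sum_univ_pi_eq_zero (by simpa using hm))
  rw [hn, Fintype.card_fun, ZMod.card, Fintype.card_fin]
  have := Nat.one_le_two_pow (n := m)
  omega

/-- If `m ≥ 2` and a digraph of order `2^m - 1` without isolated vertices is realized in
`(ℤ₂)^m` by a labeling `ψ`, then the image of the induced vertex map `φ_ψ` is exactly
`(ℤ₂)^m \ {0}`. -/
theorem stmt_2 {V : Type*} [Fintype V] (Adj : V → V → Prop) [DecidableRel Adj]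
    (m : ℕ) (hm : 2 ≤ m)
    (hiso : ∀ x : V, ∃ y : V, Adj x y ∨ Adj y x)
    (hn : Fintype.card V = 2 ^ m - 1)
    (ψ : V → V → (Fin m → ZMod 2))
    (hψ : Function.Injective (vertexSum Adj ψ)) :
    Set.range (vertexSum Adj ψ) = {g : Fin m → ZMod 2 | g ≠ 0} :=
  stmt_2_general Adj m hm hn ψ hψ
end

section
/- Any directed graph G of order n in which every weakly connected component has order at least 3 has a Γ-irregular labeling for every finite abelian group Γ such that |Γ| ≥ 2n + 2√(n − 1/2) − 1. -/
open Finset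

/-!
The vertex map of a single arc `x → y` labelled `g` is `Pi.single x g - Pi.single y g`.
Chaining arcs, the vertex maps of labelings contain every such difference with `x, y` in one
weak component, hence every `φ : V → Γ` whose sum over each weak component vanishes. It
therefore suffices to map each component bijectively onto a zero-sum subset of `Γ`, these
subsets pairwise disjoint. They can be picked greedily as soon as `|Γ| ≥ 2n`: for a component
of size `s ≥ 3` take `s - 3` fresh elements, then a fresh `a` for which the remaining target
`σ` has at most one half (if `Γ` has an element of order two, the doubles fill at most half of
`Γ`), and finally a fresh pair `b ≠ c` with `b + c = σ`.
-/

section ZeroSum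
variable {Γ : Type*} [AddCommGroup Γ] [Fintype Γ] [DecidableEq Γ]

def halves (c : Γ) : Finset Γ := {x | x + x = c}

@[simp] lemma mem_halves {c x : Γ} : x ∈ halves c ↔ x + x = c := by simp [halves]

lemma two_mul_card_image_double_le {ι : Γ} (hι : ι ≠ 0) (h2ι : ι + ι = 0) :
    2 * #(univ.image fun x : Γ => x + x) ≤ Fintype.card Γ := by
  refine mul_card_image_le_card univ 2 fun b hb => ?_
  obtain ⟨x, -, rfl⟩ := mem_image.1 hb
  calc 2 = #{x, x + ι} := by simp [hι]
    _ ≤ _ := card_le_card fun y hy => by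
      rcases mem_insert.1 hy with rfl | hy
      · simp
      · rw [mem_singleton.1 hy, mem_filter, add_add_add_comm, h2ι, add_zero]; simp

lemma card_halves_le_one (hΓ : ∀ ι : Γ, ι + ι = 0 → ι = 0) (c : Γ) : #(halves c) ≤ 1 :=
  card_le_one.2 fun a ha b hb => sub_eq_zero.1 <| hΓ _ <| by
    rw [sub_add_sub_comm, mem_halves.1 ha, mem_halves.1 hb, sub_self]

lemma exists_notMem_card_halves_sub_le_one (B : Finset Γ) (c : Γ)
    (hB : 2 * #B < Fintype.card Γ) : ∃ a ∉ B, #(halves (c - a)) ≤ 1 := by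
  by_cases hΓ : ∀ ι : Γ, ι + ι = 0 → ι = 0
  · obtain ⟨a, -, ha⟩ := exists_mem_notMem_of_card_lt_card (s := B) (t := univ)
      (by rw [card_univ]; omega)
    exact ⟨a, ha, card_halves_le_one hΓ _⟩
  push Not at hΓ
  obtain ⟨ι, h2ι, hι⟩ := hΓ
  -- avoiding the translates `c - 2x` makes `c - a` a non-double
  have hbad : #(B ∪ (univ.image fun x : Γ => x + x).image (c - ·)) < #(univ : Finset Γ) := by
    have := two_mul_card_image_double_le hι h2ι
    have := card_union_le B ((univ.image fun x : Γ => x + x).image (c - ·))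
    have := card_image_le (s := univ.image fun x : Γ => x + x) (f := (c - ·))
    rw [card_univ]
    omega
  obtain ⟨a, -, ha⟩ := exists_mem_notMem_of_card_lt_card hbad
  simp only [mem_union, mem_image, mem_univ, true_and, not_or, not_exists] at ha
  refine ⟨a, ha.1, ?_⟩
  rw [card_eq_zero.2 (eq_empty_of_forall_notMem fun x hx => ?_)]
  · exact zero_le_one
  exact ha.2 _ ⟨⟨x, mem_halves.1 hx⟩, sub_sub_cancel c a⟩

lemma exists_ne_notMem_add_eq (W : Finset Γ) (σ : Γ)
    (h : #(halves σ) + 2 * #W < Fintype.card Γ) :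
    ∃ b c, b ≠ c ∧ b ∉ W ∧ c ∉ W ∧ b + c = σ := by
  have hbad : #(W ∪ W.image (σ - ·) ∪ halves σ) < #(univ : Finset Γ) := by
    have := card_union_le (W ∪ W.image (σ - ·)) (halves σ)
    have := card_union_le W (W.image (σ - ·))
    have := card_image_le (s := W) (f := (σ - ·))
    rw [card_univ]
    omega
  obtain ⟨b, -, hb⟩ := exists_mem_notMem_of_card_lt_card hbad
  simp only [mem_union, mem_image, mem_halves, not_or, not_exists, not_and] at hb
  obtain ⟨⟨hbW, hbσ⟩, hbb⟩ := hb
  refine ⟨b, σ - b, fun h => hbb ?_, hbW, fun h => hbσ _ h (sub_sub_cancel σ b),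
    add_sub_cancel b σ⟩
  rwa [eq_sub_iff_add_eq] at h

lemma exists_card_eq_disjoint_sum_eq_zero (U : Finset Γ) {s : ℕ} (hs : 3 ≤ s)
    (h : 2 * (#U + s) ≤ Fintype.card Γ) :
    ∃ A : Finset Γ, #A = s ∧ Disjoint A U ∧ ∑ a ∈ A, a = 0 := by
  obtain ⟨F, hFU, hF⟩ := exists_subset_card_eq (s := Uᶜ) (n := s - 3) (by
    rw [card_compl]; omega)
  obtain ⟨a, haUF, ha⟩ := exists_notMem_card_halves_sub_le_one (U ∪ F) (-∑ x ∈ F, x) (by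
    have := card_union_le U F; omega)
  rw [mem_union, not_or] at haUF
  obtain ⟨b, c, hbc, hb, hc, hbc_sum⟩ :=
    exists_ne_notMem_add_eq (U ∪ insert a F) (-∑ x ∈ F, x - a) (by
      have := card_union_le U (insert a F)
      have := card_insert_le a F
      omega)
  simp only [mem_union, mem_insert, not_or] at hb hc
  have hcaF : c ∉ insert a F := by simp [hc.2.1, hc.2.2]
  have hbcaF : b ∉ insert c (insert a F) := by simp [hbc, hb.2.1, hb.2.2]
  refine ⟨insert b (insert c (insert a F)), ?_, ?_, ?_⟩
  · rw [card_insert_of_notMem hbcaF, card_insert_of_notMem hcaF, card_insert_of_notMem haUF.2]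
    omega
  · simp only [disjoint_insert_left, hb.1, hc.1, haUF.1, not_false_eq_true, true_and]
    exact disjoint_left.2 fun x hx => mem_compl.1 (hFU hx)
  · rw [sum_insert hbcaF, sum_insert hcaF, sum_insert haUF.2, ← add_assoc, hbc_sum]
    abel

end ZeroSum

lemma exists_injective_sum_fiber_eq_zero {V ι Γ : Type*} [Fintype V] [Fintype ι]
    [DecidableEq ι] [AddCommGroup Γ] [Fintype Γ] (f : V → ι)
    (hf : ∀ q, 3 ≤ #{x | f x = q})
    (h : 2 * Fintype.card V ≤ Fintype.card Γ) :
    ∃ φ : V → Γ, Function.Injective φ ∧ ∀ q, ∑ x with f x = q, φ x = 0 := by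
  classical
  suffices ∀ S : Finset ι, ∃ φ : V → Γ,
      Set.InjOn φ {x | f x ∈ S} ∧ ∀ q ∈ S, ∑ x with f x = q, φ x = 0 by
    obtain ⟨φ, hinj, hsum⟩ := this univ
    exact ⟨φ, fun x y hxy => hinj (by simp) (by simp) hxy, fun q => hsum q (mem_univ q)⟩
  intro S
  induction S using Finset.induction_on with
  | empty => exact ⟨0, by simp, by simp⟩
  | insert q S hqS ih =>
    obtain ⟨φ, hinj, hsum⟩ := ih
    have hcard : #{x | f x ∈ S} + #{x | f x = q} ≤ Fintype.card V := by
      rw [← card_union_of_disjoint (disjoint_filter.2 fun x _ hx hxq => hqS (by rwa [← hxq]))]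
      exact card_le_univ _
    set U := ({x | f x ∈ S} : Finset V).image φ
    obtain ⟨A, hA, hAU, hA0⟩ := exists_card_eq_disjoint_sum_eq_zero U (hf q) (by
      have : #U ≤ #{x | f x ∈ S} := card_image_le
      omega)
    obtain ⟨g, hg⟩ := (finite_toSet ({x | f x = q} : Finset V)).exists_bijOn_of_encard_eq
      (t := (A : Set Γ)) (by simp only [Set.encard_coe_eq_coe_finsetCard, hA])
    refine ⟨fun x => if f x = q then g x else φ x, ?_, ?_⟩
    · have hsep : ∀ x y, f x = q → f y ∈ S → g x ≠ φ y := fun x y hx hy hxy =>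
        disjoint_left.1 hAU (hg.mapsTo (by simpa using hx))
          (hxy ▸ mem_image_of_mem φ (by simpa using hy))
      intro x hx y hy hxy
      simp only [Set.mem_ofPred_eq, mem_insert] at hx hy
      by_cases hxq : f x = q <;> by_cases hyq : f y = q <;>
        simp only [hxq, hyq, if_true, if_false] at hxy
      · exact hg.injOn (by simpa using hxq) (by simpa using hyq) hxy
      · exact absurd hxy (hsep x y hxq (hy.resolve_left hyq))
      · exact absurd hxy.symm (hsep y x hyq (hx.resolve_left hxq))
      · exact hinj (hx.resolve_left hxq) (hy.resolve_left hyq) hxy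
    · intro q' hq'
      rcases mem_insert.1 hq' with rfl | hq'
      · rw [← hA0]
        exact sum_nbij g (fun x hx => hg.mapsTo hx) hg.injOn hg.surjOn fun x hx =>
          if_pos (by simpa using hx)
      · rw [← hsum q' hq']
        exact sum_congr rfl fun x hx => if_neg fun hxq => by
          rw [(mem_filter.1 hx).2] at hxq
          exact hqS (hxq ▸ hq')

lemma WReach.symm {V : Type*} {Adj : V → V → Prop} {x y : V} (h : WReach Adj x y) :
    WReach Adj y x := by
  induction h with
  | refl => exact .refl
  | tail _ hbc ih => exact .head hbc.symm ih

def weakSetoid {V : Type*} (Adj : V → V → Prop) : Setoid V :=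
  ⟨WReach Adj, ⟨fun _ => .refl, WReach.symm, .trans⟩⟩

section VertexSum
variable {V Γ : Type*} [Fintype V] [AddCommGroup Γ] (Adj : V → V → Prop) [DecidableRel Adj]

def vertexSumHom : (V → V → Γ) →+ (V → Γ) where
  toFun := vertexSum Adj
  map_zero' := by ext; simp [vertexSum]
  map_add' ψ₁ ψ₂ := by
    ext
    simp only [vertexSum, Pi.add_apply, sum_add_distrib]
    abel

variable [DecidableEq V] {Adj}

lemma vertexSum_single_single {x y : V} (h : Adj x y) (g : Γ) :
    vertexSum Adj (Function.curry (Pi.single (x, y) g)) = Pi.single x g - Pi.single y g := by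
  ext v
  simp only [vertexSum, Function.curry_apply, Pi.sub_apply, Pi.single_apply, Prod.mk.injEq,
    ite_and, sum_ite_eq', sum_ite_irrel, sum_const_zero, mem_filter, mem_univ, true_and]
  split_ifs <;> simp_all

lemma single_sub_single_mem_range {x y : V} (h : WReach Adj x y) (g : Γ) :
    (Pi.single x g - Pi.single y g : V → Γ) ∈ (vertexSumHom Adj).range := by
  induction h with
  | refl => simp
  | @tail b c _ hbc ih =>
    rw [← sub_add_sub_cancel _ (Pi.single b g)]
    refine add_mem ih ?_
    rcases hbc with hbc | hcb
    · exact ⟨_, vertexSum_single_single hbc g⟩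
    · rw [← neg_sub]
      exact neg_mem ⟨_, vertexSum_single_single hcb g⟩

lemma mem_range_vertexSumHom {ι : Type*} [Fintype ι] [DecidableEq ι] {f : V → ι}
    (hf : Function.Surjective f) (hconn : ∀ x y, f x = f y → WReach Adj x y) {φ : V → Γ}
    (hφ : ∀ q, ∑ x with f x = q, φ x = 0) : φ ∈ (vertexSumHom Adj).range := by
  set r := Function.surjInv hf
  have hr : ∑ x, (Pi.single (r (f x)) (φ x) : V → Γ) = 0 := by
    rw [← sum_fiberwise univ f]
    refine sum_eq_zero fun q _ => ?_
    calc ∑ x with f x = q, (Pi.single (r (f x)) (φ x) : V → Γ)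
        = ∑ x with f x = q, AddMonoidHom.single (fun _ => Γ) (r q) (φ x) :=
          sum_congr rfl fun x hx => by rw [(mem_filter.1 hx).2]; rfl
      _ = 0 := by rw [← map_sum, hφ, map_zero]
  have : φ = ∑ x, (Pi.single x (φ x) - Pi.single (r (f x)) (φ x)) := by
    rw [sum_sub_distrib, univ_sum_single, hr, sub_zero]
  rw [this]
  exact sum_mem fun x _ => single_sub_single_mem_range
    (hconn _ _ (Function.surjInv_eq hf (f x)).symm) (φ x)

end VertexSum

lemma two_mul_le_of_two_mul_add_two_mul_sqrt_sub_le {n m : ℕ}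
    (h : 2 * (n : ℝ) + 2 * √((n : ℝ) - 1 / 2) - 1 ≤ m) : 2 * n ≤ m := by
  rcases n.eq_zero_or_pos with rfl | hn
  · simp
  have hn : (1 : ℝ) ≤ n := by exact_mod_cast hn
  have : 1 / 2 ≤ √((n : ℝ) - 1 / 2) := Real.le_sqrt_of_sq_le (by linarith)
  exact_mod_cast (by linarith : 2 * (n : ℝ) ≤ m)

/-- Theorem (Cichacz–Tuza): any digraph of order `n` with all weakly connected components of
order at least 3 has a `Γ`-irregular labeling whenever `|Γ| ≥ 2n + 2·√(n - 1/2) - 1`. -/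
theorem stmt_4 {V Γ : Type*} [Fintype V] [AddCommGroup Γ] [Fintype Γ]
    (Adj : V → V → Prop) [DecidableRel Adj]
    (hcomp : ∀ x : V, 3 ≤ {y | WReach Adj x y}.ncard)
    (hΓ : 2 * (Fintype.card V : ℝ) + 2 * Real.sqrt ((Fintype.card V : ℝ) - 1 / 2) - 1
      ≤ (Fintype.card Γ : ℝ)) :
    ∃ ψ : V → V → Γ, Function.Injective (vertexSum Adj ψ) := by
  classical
  have hfiber : ∀ q, 3 ≤ #{x | Quotient.mk (weakSetoid Adj) x = q} := by
    refine Quotient.ind fun x => ?_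
    convert hcomp x using 1
    rw [← Set.ncard_coe_finset]
    congr 1
    ext y
    simp only [coe_filter, mem_univ, true_and, Set.mem_ofPred_eq, Quotient.eq]
    exact ⟨WReach.symm, WReach.symm⟩
  obtain ⟨φ, hφ, hφ0⟩ := exists_injective_sum_fiber_eq_zero _ hfiber
    (two_mul_le_of_two_mul_add_two_mul_sqrt_sub_le hΓ)
  obtain ⟨ψ, rfl⟩ := mem_range_vertexSumHom Quotient.mk_surjective
    (fun _ _ => Quotient.exact) hφ0
  exact ⟨ψ, hφ⟩
end

section
/- Let n be an even positive integer and let m, l be natural numbers such that 3m + 2l = n − 2. Then the set S = Z_n \ {0, n/2} can be partitioned into m pairwise disjoint zero-sum 3-element subsets A_1, …, A_m and l pairwise disjoint zero-sum 2-element subsets B_1, …, B_l. -/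
/-!
Write `m = 2k`, so that `n = 2q` with `q = 3k + l + 1`. Reduction modulo `n` maps the integers
`0 < |x| < q` bijectively onto `ZMod n \ {0, n/2}` and preserves zero sums, so it suffices to
partition `{x : ℤ | 0 < |x| < q}` into `2k` zero-sum triples and `l` zero-sum pairs. The pairs are
`{x, -x}` with `3k < x < q`; the triples are `{t + 1, 3k - 1 - 2t, -(3k - t)}` and
`{-(t + 1), -(k + 1 + t), k + 2t + 2}` for `t < k`, which together cover `±1, …, ±3k` exactly once.
-/

open Finset

section ZeroSumPartition

variable {G H : Type*} [AddCommMonoid G] [DecidableEq G] {m l : ℕ}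

def IsZeroSumPartition (A : Fin m → Finset G) (B : Fin l → Finset G) (S : Finset G) : Prop :=
  (∀ i, #(A i) = 3 ∧ ∑ x ∈ A i, x = 0) ∧
  (∀ j, #(B j) = 2 ∧ ∑ x ∈ B j, x = 0) ∧
  (∀ i j, i ≠ j → Disjoint (A i) (A j)) ∧
  (∀ i j, i ≠ j → Disjoint (B i) (B j)) ∧
  (∀ i j, Disjoint (A i) (B j)) ∧
  univ.biUnion A ∪ univ.biUnion B = S

theorem IsZeroSumPartition.image [AddCommMonoid H] [DecidableEq H] {A : Fin m → Finset G}
    {B : Fin l → Finset G} {S : Finset G} (hP : IsZeroSumPartition A B S) (f : G →+ H)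
    (hf : Set.InjOn f S) :
    IsZeroSumPartition (fun i ↦ (A i).image f) (fun j ↦ (B j).image f) (S.image f) := by
  obtain ⟨hA, hB, hAA, hBB, hAB, hS⟩ := hP
  have hAS (i : Fin m) : (A i : Set G) ⊆ S := by
    rw [← hS]; exact coe_subset.2 (subset_union_left.trans' (subset_biUnion_of_mem _ (mem_univ i)))
  have hBS (j : Fin l) : (B j : Set G) ⊆ S := by
    rw [← hS]; exact coe_subset.2 (subset_union_right.trans' (subset_biUnion_of_mem _ (mem_univ j)))
  have card_sum {s : Finset G} (hs : (s : Set G) ⊆ S) :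
      #(s.image f) = #s ∧ ∑ x ∈ s.image f, x = f (∑ x ∈ s, x) := by
    rw [map_sum, sum_image fun x hx y hy ↦ hf (hs hx) (hs hy)]
    exact ⟨card_image_of_injOn (hf.mono hs), rfl⟩
  have disj {s t : Finset G} (h : Disjoint s t) (hs : (s : Set G) ⊆ S) (ht : (t : Set G) ⊆ S) :
      Disjoint (s.image f) (t.image f) := by
    rw [← disjoint_coe, coe_image, coe_image]
    exact (disjoint_coe.2 h).image hf hs ht
  refine ⟨fun i ↦ ?_, fun j ↦ ?_, fun i j h ↦ disj (hAA i j h) (hAS i) (hAS j),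
    fun i j h ↦ disj (hBB i j h) (hBS i) (hBS j), fun i j ↦ disj (hAB i j) (hAS i) (hBS j), ?_⟩
  · rw [(card_sum (hAS i)).1, (card_sum (hAS i)).2, (hA i).2, map_zero]; exact ⟨(hA i).1, rfl⟩
  · rw [(card_sum (hBS j)).1, (card_sum (hBS j)).2, (hB j).2, map_zero]; exact ⟨(hB j).1, rfl⟩
  · rw [← hS, image_union, biUnion_image, biUnion_image]

end ZeroSumPartition

/-- The second family is indexed by `i = k + t`. The first family covers `1, …, k`, the
`k + 1, k + 3, …, 3k - 1` and `-(2k + 1), …, -3k`; the second covers the rest of `±1, …, ±3k`. -/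
def intTriple (k i : ℕ) : Finset ℤ :=
  if i < k then {(i : ℤ) + 1, 3 * (k : ℤ) - 1 - 2 * i, (i : ℤ) - 3 * k}
  else {(k : ℤ) - i - 1, -(i : ℤ) - 1, 2 * (i : ℤ) - k + 2}

def intPair (k : ℕ) {l : ℕ} (j : Fin l) : Finset ℤ :=
  {3 * (k : ℤ) + 1 + j, -(3 * (k : ℤ) + 1 + j)}

theorem mem_intTriple_iff {k i : ℕ} {x : ℤ} :
    x ∈ intTriple k i ↔ if i < k then x = i + 1 ∨ x = 3 * k - 1 - 2 * i ∨ x = i - 3 * k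
      else x = k - i - 1 ∨ x = -i - 1 ∨ x = 2 * i - k + 2 := by
  unfold intTriple
  split_ifs <;> simp only [mem_insert, mem_singleton]

theorem ne_zero_and_natAbs_le_of_mem_intTriple {k i : ℕ} (hi : i < 2 * k) {x : ℤ}
    (hx : x ∈ intTriple k i) :
    x ≠ 0 ∧ x.natAbs ≤ 3 * k := by
  rw [mem_intTriple_iff] at hx
  split_ifs at hx <;> omega

theorem mem_intPair_iff (k : ℕ) {l : ℕ} (j : Fin l) (x : ℤ) :
    x ∈ intPair k j ↔ x.natAbs = 3 * k + 1 + j := by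
  simp only [intPair, mem_insert, mem_singleton]
  omega

theorem card_intTriple_and_sum {k i : ℕ} (hi : i < 2 * k) :
    #(intTriple k i) = 3 ∧ ∑ x ∈ intTriple k i, x = 0 := by
  have key {x y z : ℤ} (hxy : x ≠ y) (hxz : x ≠ z) (hyz : y ≠ z) (hsum : x + y + z = 0) :
      #{x, y, z} = 3 ∧ ∑ a ∈ {x, y, z}, a = 0 := by
    refine ⟨card_eq_three.2 ⟨x, y, z, hxy, hxz, hyz, rfl⟩, ?_⟩
    rw [sum_insert (by simp [hxy, hxz]), sum_pair hyz, ← add_assoc, hsum]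
  unfold intTriple
  split_ifs <;> exact key (by omega) (by omega) (by omega) (by ring)

theorem card_intPair_and_sum (k : ℕ) {l : ℕ} (j : Fin l) :
    #(intPair k j) = 2 ∧ ∑ x ∈ intPair k j, x = 0 := by
  have hne : (3 * k + 1 + j : ℤ) ≠ -(3 * k + 1 + j) := by omega
  exact ⟨card_pair hne, by rw [intPair, sum_pair hne, add_neg_cancel]⟩

theorem disjoint_intTriple {k i j : ℕ} (hi : i < 2 * k) (hj : j < 2 * k) (hij : i ≠ j) :
    Disjoint (intTriple k i) (intTriple k j) := by
  refine disjoint_left.2 fun x hxi hxj ↦ ?_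
  rw [mem_intTriple_iff] at hxi hxj
  split_ifs at hxi hxj <;> omega

theorem disjoint_intPair (k : ℕ) {l : ℕ} {i j : Fin l} (hij : i ≠ j) :
    Disjoint (intPair k i) (intPair k j) := by
  refine disjoint_left.2 fun x hxi hxj ↦ Fin.val_ne_of_ne hij ?_
  rw [mem_intPair_iff] at hxi hxj
  omega

theorem disjoint_intTriple_intPair {k i : ℕ} (hi : i < 2 * k) {l : ℕ} (j : Fin l) :
    Disjoint (intTriple k i) (intPair k j) := by
  refine disjoint_left.2 fun x hxi hxj ↦ ?_
  have := ne_zero_and_natAbs_le_of_mem_intTriple hi hxi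
  rw [mem_intPair_iff] at hxj
  omega

theorem exists_mem_intTriple_of_natAbs_le {k : ℕ} {x : ℤ} (hx0 : x ≠ 0) (hx : x.natAbs ≤ 3 * k) :
    ∃ i < 2 * k, x ∈ intTriple k i := by
  rcases lt_or_gt_of_ne hx0 with hneg | hpos
  · by_cases h1 : -x ≤ k
    · exact ⟨k - 1 + x.natAbs, by omega, mem_intTriple_iff.2 (by split_ifs <;> omega)⟩
    by_cases h2 : -x ≤ 2 * k
    · exact ⟨x.natAbs - 1, by omega, mem_intTriple_iff.2 (by split_ifs <;> omega)⟩
    · exact ⟨3 * k - x.natAbs, by omega, mem_intTriple_iff.2 (by split_ifs <;> omega)⟩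
  · by_cases h1 : x ≤ k
    · exact ⟨x.natAbs - 1, by omega, mem_intTriple_iff.2 (by split_ifs <;> omega)⟩
    by_cases h2 : (x - k) % 2 = 1
    · exact ⟨(3 * k - 1 - x.natAbs) / 2, by omega, mem_intTriple_iff.2 (by split_ifs <;> omega)⟩
    · exact ⟨(x.natAbs + k - 2) / 2, by omega, mem_intTriple_iff.2 (by split_ifs <;> omega)⟩

theorem isZeroSumPartition_int (k l : ℕ) :
    IsZeroSumPartition (fun i : Fin (2 * k) ↦ intTriple k i) (intPair k (l := l))
      ((Ioo (-((3 * k + l + 1 : ℕ) : ℤ)) (3 * k + l + 1 : ℕ)).erase 0) := by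
  refine ⟨fun i ↦ card_intTriple_and_sum i.2, card_intPair_and_sum k,
    fun i j h ↦ disjoint_intTriple i.2 j.2 (Fin.val_ne_of_ne h), fun i j ↦ disjoint_intPair k,
    fun i j ↦ disjoint_intTriple_intPair i.2 j, ?_⟩
  ext x
  simp only [mem_union, mem_biUnion, mem_univ, true_and, mem_erase, mem_Ioo, mem_intPair_iff]
  constructor
  · rintro (⟨i, hx⟩ | ⟨j, hx⟩)
    · have := ne_zero_and_natAbs_le_of_mem_intTriple i.2 hx
      omega
    · omega
  · rintro ⟨hx0, hx⟩
    by_cases hx3 : x.natAbs ≤ 3 * k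
    · obtain ⟨i, hi, hxi⟩ := exists_mem_intTriple_of_natAbs_le hx0 hx3
      exact Or.inl ⟨⟨i, hi⟩, hxi⟩
    · exact Or.inr ⟨⟨x.natAbs - 3 * k - 1, by omega⟩, by simp only; omega⟩

namespace ZMod

variable {n : ℕ} [NeZero n]

theorem valMinAbs_intCast_of_mem_Ioo (hn : Even n) {a : ℤ}
    (ha : a ∈ Set.Ioo (-((n / 2 : ℕ) : ℤ)) (n / 2 : ℕ)) : (a : ZMod n).valMinAbs = a := by
  obtain ⟨r, rfl⟩ := hn
  obtain ⟨hlo, hhi⟩ := ha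
  exact (valMinAbs_spec _ a).2 ⟨rfl, by omega, by omega⟩

theorem intCast_injOn_Ioo (hn : Even n) :
    Set.InjOn (Int.cast : ℤ → ZMod n) (Set.Ioo (-((n / 2 : ℕ) : ℤ)) (n / 2 : ℕ)) :=
  fun a ha b hb hab ↦ by
    rw [← valMinAbs_intCast_of_mem_Ioo hn ha, hab, valMinAbs_intCast_of_mem_Ioo hn hb]

theorem image_intCast_Ioo_erase_zero (hn : Even n) :
    ((Ioo (-((n / 2 : ℕ) : ℤ)) (n / 2 : ℕ)).erase 0).image (Int.cast : ℤ → ZMod n) =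
      univ \ {0, ((n / 2 : ℕ) : ZMod n)} := by
  have hhalf : ((n / 2 : ℕ) : ZMod n).valMinAbs = (n / 2 : ℕ) := valMinAbs_natCast_of_le_half le_rfl
  ext z
  simp only [mem_image, mem_erase, mem_Ioo, mem_sdiff, mem_univ, true_and, mem_insert,
    mem_singleton, not_or]
  constructor
  · rintro ⟨a, ⟨ha0, ha⟩, rfl⟩
    have hval := valMinAbs_intCast_of_mem_Ioo hn ha
    refine ⟨fun h ↦ ha0 ?_, fun h ↦ ?_⟩
    · rwa [h, valMinAbs_zero, eq_comm] at hval
    · rw [h, hhalf] at hval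
      omega
  · rintro ⟨hz0, hzq⟩
    have hz := valMinAbs_mem_Ioc z
    have hz0' : z.valMinAbs ≠ 0 := (valMinAbs_eq_zero z).not.2 hz0
    have hzq' : z.valMinAbs ≠ (n / 2 : ℕ) := fun h ↦ hzq (by rw [← valMinAbs_inj, h, hhalf])
    obtain ⟨r, rfl⟩ := hn
    exact ⟨z.valMinAbs, ⟨hz0', by simp only [Set.mem_Ioc] at hz; omega⟩, coe_valMinAbs z⟩

end ZMod

/-- Corollary (Tannenbaum, Zeng): for `n` even and positive with `3m + 2l = n - 2`, the set
`ZMod n \ {0, n/2}` can be partitioned into `m` zero-sum 3-subsets and `l` zero-sum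
2-subsets. -/
theorem stmt_9 (n : ℕ) [NeZero n] (hn : Even n) (m l : ℕ)
    (h : 3 * m + 2 * l = n - 2) :
    ∃ (A : Fin m → Finset (ZMod n)) (B : Fin l → Finset (ZMod n)),
      (∀ i, (A i).card = 3 ∧ ∑ x ∈ A i, x = 0) ∧
      (∀ j, (B j).card = 2 ∧ ∑ x ∈ B j, x = 0) ∧
      (∀ i j, i ≠ j → Disjoint (A i) (A j)) ∧
      (∀ i j, i ≠ j → Disjoint (B i) (B j)) ∧
      (∀ i j, Disjoint (A i) (B j)) ∧
      univ.biUnion A ∪ univ.biUnion B =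
        univ \ {0, ((n / 2 : ℕ) : ZMod n)} := by
  have hn2 := hn.two_dvd
  have hn0 := NeZero.ne n
  obtain ⟨k, rfl⟩ : ∃ k, m = 2 * k := ⟨m / 2, by omega⟩
  have hq : 3 * k + l + 1 = n / 2 := by omega
  have hP := isZeroSumPartition_int k l
  rw [hq] at hP
  have hInj :
      Set.InjOn (Int.castAddHom (ZMod n)) ↑((Ioo (-((n / 2 : ℕ) : ℤ)) (n / 2 : ℕ)).erase 0) :=
    (ZMod.intCast_injOn_Ioo hn).mono (by rw [coe_erase, coe_Ioo]; exact Set.sdiff_subset)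
  have := hP.image _ hInj
  rw [Int.coe_castAddHom, ZMod.image_intCast_Ioo_erase_zero hn] at this
  exact ⟨_, _, this⟩
end
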